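/- arXiv:1505.02708 — 6 statements merged into one kernel-verified Lean document; each statement's English description precedes it below -/
import Mathlib

section
/- Let u = [a₁,a₂]×[b₁,b₂] and v = [c₁,c₂]×[d₁,d₂] be horizontally adjacent axis-aligned rectangles with u above v (b₁ = d₂), with a₁ < c₁ and a₂ = c₂, and let p = (px,py) be a point in the interior of u. Fix g₁, g₂ with d₁ < g₁ < g₂ < d₂. Then there exists X ≥ c₂ such that for every x ≥ X, if u and v are stretched to u' = [a₁,x]×[b₁,b₂] and v' = [c₁,x]×[d₁,d₂] (so that their common segment becomes [c₁,x]×{d₂}), the gate {x}×[g₁,g₂] of v' is contained in the visibility region vis(p, v'), i.e. for every t ∈ [g₁,g₂] the open segment from p to (x,t) meets the relative interior of [c₁,x]×{d₂}. -/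
/-!
The segment from `p` (strictly above the line `y = d₂`) to a gate point `(x, t)` (strictly below
it) crosses that line at the parameter `s = (p.2 - d₂) / (p.2 - t)`, which lies in `(0, 1)` and is
bounded below by its value at `t = g₁`, independently of `x`. The crossing abscissa
`p.1 + s (x - p.1)` is therefore below `x` and, once `x` is large, above `c₁`.
-/

open Set

/-- The visibility region of a point `p` inside a rectangle `v` whose common segment
with the rectangle containing `p` has relative interior `relS`: the points `w ∈ v`
such that the open segment from `p` to `w` meets `relS`. -/
def visRegion (p : ℝ × ℝ) (v relS : Set (ℝ × ℝ)) : Set (ℝ × ℝ) :=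
  {w | w ∈ v ∧ (openSegment ℝ p w ∩ relS).Nonempty}

open Filter AffineMap

noncomputable def heightParam (y₀ y₁ h : ℝ) : ℝ := (y₀ - h) / (y₀ - y₁)

lemma lineMap_heightParam {y₀ y₁ : ℝ} (h : ℝ) (hy : y₁ ≠ y₀) :
    lineMap y₀ y₁ (heightParam y₀ y₁ h) = h := by
  have : y₀ - y₁ ≠ 0 := sub_ne_zero.2 hy.symm
  rw [lineMap_apply_ring', heightParam]
  field_simp
  ring

lemma heightParam_pos {y₀ y₁ h : ℝ} (hh : h < y₀) (hy : y₁ < y₀) : 0 < heightParam y₀ y₁ h :=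
  div_pos (sub_pos.2 hh) (sub_pos.2 hy)

lemma heightParam_lt_one {y₀ y₁ h : ℝ} (hy : y₁ < h) (hh : h < y₀) : heightParam y₀ y₁ h < 1 :=
  (div_lt_one (by linarith)).2 (by linarith)

lemma heightParam_le_heightParam {y₀ y₁ y₁' h : ℝ} (hh : h ≤ y₀) (hy : y₁ ≤ y₁')
    (hy' : y₁' < y₀) : heightParam y₀ y₁ h ≤ heightParam y₀ y₁' h :=
  div_le_div_of_nonneg_left (sub_nonneg.2 hh) (sub_pos.2 hy') (by linarith)

lemma mem_visRegion_of_lineMap_mem {p w : ℝ × ℝ} {v S : Set (ℝ × ℝ)} {s : ℝ} (hw : w ∈ v)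
    (hs : s ∈ Ioo 0 1) (hS : lineMap p w s ∈ S) : w ∈ visRegion p v S :=
  ⟨hw, lineMap p w s, by rw [openSegment_eq_image_lineMap]; exact mem_image_of_mem _ hs, hS⟩

lemma eventually_lineMap_mem_Ioo {ε : ℝ} (hε : 0 < ε) (q c : ℝ) :
    ∀ᶠ x in atTop, ∀ s ∈ Ico ε 1, lineMap q x s ∈ Ioo c x := by
  have hlin : Tendsto (fun x => lineMap q x ε) atTop atTop := by
    simp only [lineMap_apply_ring']
    exact tendsto_atTop_add_const_right _ _
      ((tendsto_atTop_add_const_right _ _ tendsto_id).const_mul_atTop hε)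
  filter_upwards [hlin.eventually_gt_atTop c, eventually_gt_atTop q] with x hcx hqx s ⟨hεs, hs1⟩
  rw [lineMap_apply_ring'] at hcx ⊢
  constructor <;> nlinarith

theorem gate_in_vis_of_horizontal_adjacency_after_stretch_general
    (a₁ a₂ b₁ b₂ c₁ c₂ d₁ d₂ g₁ g₂ : ℝ) (p : ℝ × ℝ)
    (hbot : b₁ = d₂)
    (hp : p ∈ interior (Icc a₁ a₂ ×ˢ Icc b₁ b₂))
    (hg₁ : d₁ < g₁) (hg : g₁ < g₂) (hg₂ : g₂ < d₂) :
    ∃ X : ℝ, c₂ ≤ X ∧ ∀ x : ℝ, X ≤ x →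
      ({x} : Set ℝ) ×ˢ Icc g₁ g₂ ⊆
        visRegion p (Icc c₁ x ×ˢ Icc d₁ d₂) (Ioo c₁ x ×ˢ ({d₂} : Set ℝ)) := by
  rw [interior_prod_eq, interior_Icc, interior_Icc, hbot] at hp
  have hpy : d₂ < p.2 := hp.2.1
  have hε : 0 < heightParam p.2 g₁ d₂ := heightParam_pos hpy (by linarith)
  obtain ⟨X, hX⟩ := eventually_atTop.1
    ((eventually_ge_atTop c₂).and (eventually_lineMap_mem_Ioo hε p.1 c₁))
  refine ⟨X, (hX X le_rfl).1, fun x hx => ?_⟩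
  rintro ⟨x', t⟩ ⟨hx' : x' = x, ht : t ∈ Icc g₁ g₂⟩
  subst x'
  have htd : t < d₂ := ht.2.trans_lt hg₂
  have hs : heightParam p.2 t d₂ ∈ Ico (heightParam p.2 g₁ d₂) 1 :=
    ⟨heightParam_le_heightParam hpy.le ht.1 (by linarith), heightParam_lt_one htd hpy⟩
  have hcross := (hX x hx).2 _ hs
  refine mem_visRegion_of_lineMap_mem
    ⟨⟨hcross.1.le.trans hcross.2.le, le_rfl⟩, hg₁.le.trans ht.1, htd.le⟩
    ⟨heightParam_pos hpy (by linarith), hs.2⟩ ⟨by rwa [fst_lineMap], ?_⟩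
  rw [snd_lineMap, mem_singleton_iff]
  exact lineMap_heightParam _ (by linarith)

/-- two horizontally adjacent rectangles `u = [a₁,a₂]×[b₁,b₂]` (above) and
`v = [c₁,c₂]×[d₁,d₂]` (below) with `b₁ = d₂`, `a₁ < c₁`, `a₂ = c₂`, a point `p`
in the interior of `u`, and a gate height interval `[g₁,g₂]` with `d₁ < g₁ < g₂ < d₂`.
After a sufficiently large common stretch of the right sides of `u` and `v`, the gate
of the stretched `v` is contained in the visibility region of `p` inside stretched `v`. -/
theorem gate_in_vis_of_horizontal_adjacency_after_stretch
    (a₁ a₂ b₁ b₂ c₁ c₂ d₁ d₂ g₁ g₂ : ℝ) (p : ℝ × ℝ)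
    (ha : a₁ < a₂) (hb : b₁ < b₂) (hc : c₁ < c₂) (hd : d₁ < d₂)
    (hbot : b₁ = d₂) (ha₁c₁ : a₁ < c₁) (ha₂c₂ : a₂ = c₂)
    (hp : p ∈ interior (Icc a₁ a₂ ×ˢ Icc b₁ b₂))
    (hg₁ : d₁ < g₁) (hg : g₁ < g₂) (hg₂ : g₂ < d₂) :
    ∃ X : ℝ, c₂ ≤ X ∧ ∀ x : ℝ, X ≤ x →
      ({x} : Set ℝ) ×ˢ Icc g₁ g₂ ⊆
        visRegion p (Icc c₁ x ×ˢ Icc d₁ d₂) (Ioo c₁ x ×ˢ ({d₂} : Set ℝ)) :=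
  gate_in_vis_of_horizontal_adjacency_after_stretch_general a₁ a₂ b₁ b₂ c₁ c₂ d₁ d₂ g₁ g₂ p hbot hp
    hg₁ hg hg₂
end

section
/- Let u = [a₁,a₂]×[b₁,b₂] and v = [a₂,c₂]×[d₁,d₂] be vertically adjacent axis-aligned rectangles with u to the left of v, with common segment [u,v] = {a₂}×[max(b₁,d₁), min(b₂,d₂)] of positive length, and let p = (px,py) be a point in the interior of u that is a diverging neighbor of v, i.e. max(b₁,d₁) < py < min(b₂,d₂). Fix g₁, g₂ with d₁ < g₁ < g₂ < d₂. Then there exists X ≥ c₂ such that for every x ≥ X, if v is stretched to v' = [a₂,x]×[d₁,d₂], the gate {x}×[g₁,g₂] of v' is contained in the visibility region vis(p, v'), i.e. for every t ∈ [g₁,g₂] the open segment from p to (x,t) meets the relative interior of [u,v]. -/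
open Set

/-- two vertically adjacent rectangles `u = [a₁,a₂]×[b₁,b₂]` (left) and
`v = [a₂,c₂]×[d₁,d₂]` (right) whose common segment `{a₂}×[max(b₁,d₁), min(b₂,d₂)]`
has positive length, a point `p = (px,py)` in the interior of `u` that is a diverging
neighbor of `v` (`max(b₁,d₁) < py < min(b₂,d₂)`), and a gate height interval `[g₁,g₂]`
with `d₁ < g₁ < g₂ < d₂`. After a sufficiently large stretch of `v`, the gate of the
stretched `v` is contained in the visibility region of `p` inside stretched `v`. -/
theorem gate_in_vis_of_diverging_neighbor_after_stretch
    (a₁ a₂ b₁ b₂ c₂ d₁ d₂ g₁ g₂ px py : ℝ)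
    (ha : a₁ < a₂) (hb : b₁ < b₂) (hc : a₂ < c₂) (hd : d₁ < d₂)
    (hcommon : max b₁ d₁ < min b₂ d₂)
    (hp : (px, py) ∈ interior (Icc a₁ a₂ ×ˢ Icc b₁ b₂))
    (hdiv₁ : max b₁ d₁ < py) (hdiv₂ : py < min b₂ d₂)
    (hg₁ : d₁ < g₁) (hg : g₁ < g₂) (hg₂ : g₂ < d₂) :
    ∃ X : ℝ, c₂ ≤ X ∧ ∀ x : ℝ, X ≤ x →
      ({x} : Set ℝ) ×ˢ Icc g₁ g₂ ⊆
        visRegion (px, py) (Icc a₂ x ×ˢ Icc d₁ d₂)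
          (({a₂} : Set ℝ) ×ˢ Ioo (max b₁ d₁) (min b₂ d₂)) := by
  rw [interior_prod_eq, interior_Icc, interior_Icc, mem_prod] at hp
  obtain ⟨hpx, hpy⟩ := hp
  have hpxa : px < a₂ := hpx.2
  set M := max b₁ d₁ with hM
  set N := min b₂ d₂ with hN
  set ε : ℝ := min (py - M) (N - py) with hε
  have hε0 : 0 < ε := lt_min (by linarith) (by linarith)
  set C : ℝ := |g₁ - py| + |g₂ - py| + 1 with hC
  have hC0 : 0 < C := by positivity
  refine ⟨max c₂ (px + (a₂ - px) * (2 * C / ε)), le_max_left _ _, ?_⟩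
  rintro x hx ⟨wx, t⟩ hw
  rw [mem_prod, mem_singleton_iff] at hw
  obtain ⟨hwx, hwt⟩ := hw
  simp only at hwx hwt
  subst hwx
  have hxc : c₂ ≤ wx := le_trans (le_max_left _ _) hx
  have hxa : a₂ < wx := lt_of_lt_of_le hc hxc
  have hxpx : 0 < wx - px := by linarith
  have hxbig : px + (a₂ - px) * (2 * C / ε) ≤ wx := le_trans (le_max_right _ _) hx
  set s : ℝ := (a₂ - px) / (wx - px) with hs
  have hs0 : 0 < s := div_pos (by linarith) hxpx
  have hs1 : s < 1 := (div_lt_one hxpx).mpr (by linarith)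
  have key : s * C ≤ ε / 2 := by
    rw [hs, div_mul_eq_mul_div, div_le_iff₀ hxpx]
    have h1 : (a₂ - px) * (2 * C / ε) ≤ wx - px := by linarith
    have h2 : ε / 2 * ((a₂ - px) * (2 * C / ε)) = (a₂ - px) * C := by
      field_simp
    nlinarith [mul_le_mul_of_nonneg_left h1 (le_of_lt (half_pos hε0))]
  have htb : |t - py| ≤ C - 1 := by
    have h1 : -|g₁ - py| ≤ g₁ - py := neg_abs_le _
    have h2 : g₂ - py ≤ |g₂ - py| := le_abs_self _
    have h3 : (0:ℝ) ≤ |g₁ - py| := abs_nonneg _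
    have h4 : (0:ℝ) ≤ |g₂ - py| := abs_nonneg _
    have h5 := hwt.1
    have h6 := hwt.2
    rw [abs_le, hC]
    constructor <;> linarith
  have hst : |s * (t - py)| ≤ ε / 2 := by
    rw [abs_mul, abs_of_pos hs0]
    calc s * |t - py| ≤ s * C := by nlinarith [abs_nonneg (t - py)]
    _ ≤ ε / 2 := key
  have habs := abs_le.mp hst
  have hεM : ε ≤ py - M := min_le_left _ _
  have hεN : ε ≤ N - py := min_le_right _ _
  refine ⟨⟨⟨le_of_lt hxa, le_refl wx⟩, ⟨by linarith [hwt.1], by linarith [hwt.2]⟩⟩, ?_⟩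
  refine ⟨(a₂, py + s * (t - py)), ⟨1 - s, s, by linarith, hs0, by ring, ?_⟩, ?_⟩
  · have hse : s * (wx - px) = a₂ - px := div_mul_cancel₀ _ (ne_of_gt hxpx)
    have hxe : (1 - s) * px + s * wx = a₂ := by linear_combination hse
    have hye : (1 - s) * py + s * t = py + s * (t - py) := by ring
    show ((1 - s) * px + s * wx, (1 - s) * py + s * t) = (a₂, py + s * (t - py))
    rw [hxe, hye]
  · rw [mem_prod, mem_singleton_iff]
    refine ⟨rfl, ⟨?_, ?_⟩⟩
    · show M < py + s * (t - py)
      linarith [habs.1]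
    · show py + s * (t - py) < N
      linarith [habs.2]
end

section
/- Let u = [a₁,a₂]×[b₁,b₂] and v = [a₂,c₂]×[d₁,d₂] be vertically adjacent axis-aligned rectangles with u to the left of v, with common segment [u,v] = {a₂}×[max(b₁,d₁), min(b₂,d₂)] of positive length, and let p = (px,py) be a point in the interior of u with max(b₁,d₁) < py < min(b₂,d₂) (p is a diverging neighbor of v). Then there exists X ≥ c₂ such that for every x ≥ X, if v is stretched to v' = [a₂,x]×[d₁,d₂], the entire right side R(v') = {x}×[d₁,d₂] is contained in the visibility region vis(p, v'), i.e. for every t ∈ [d₁,d₂] the open segment from p to (x,t) meets the relative interior of [u,v]. -/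
open Set

/-- two vertically adjacent rectangles `u = [a₁,a₂]×[b₁,b₂]` (left) and
`v = [a₂,c₂]×[d₁,d₂]` (right) whose common segment `{a₂}×[max(b₁,d₁), min(b₂,d₂)]`
has positive length, and a point `p = (px,py)` in the interior of `u` that is a
diverging neighbor of `v` (`max(b₁,d₁) < py < min(b₂,d₂)`). After a sufficiently
large stretch of `v`, the whole right side `R(v') = {x}×[d₁,d₂]` of the stretched `v`
is contained in the visibility region of `p` inside stretched `v`. -/
theorem right_side_in_vis_of_diverging_neighbor_after_stretch
    (a₁ a₂ b₁ b₂ c₂ d₁ d₂ px py : ℝ)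
    (ha : a₁ < a₂) (hb : b₁ < b₂) (hc : a₂ < c₂) (hd : d₁ < d₂)
    (hcommon : max b₁ d₁ < min b₂ d₂)
    (hp : (px, py) ∈ interior (Icc a₁ a₂ ×ˢ Icc b₁ b₂))
    (hdiv₁ : max b₁ d₁ < py) (hdiv₂ : py < min b₂ d₂) :
    ∃ X : ℝ, c₂ ≤ X ∧ ∀ x : ℝ, X ≤ x →
      ({x} : Set ℝ) ×ˢ Icc d₁ d₂ ⊆
        visRegion (px, py) (Icc a₂ x ×ˢ Icc d₁ d₂)
          (({a₂} : Set ℝ) ×ˢ Ioo (max b₁ d₁) (min b₂ d₂)) := by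
  rw [interior_prod_eq, interior_Icc, interior_Icc] at hp
  obtain ⟨⟨hpx1, hpx2⟩, hpy1, hpy2⟩ := hp
  set m₁ := max b₁ d₁ with hm₁
  set m₂ := min b₂ d₂ with hm₂
  set M : ℝ := max (py - d₁) (d₂ - py) with hM
  set ε : ℝ := min (py - m₁) (m₂ - py) with hε
  have hεpos : 0 < ε := lt_min (by linarith) (by linarith)
  have hMpos : 0 < M := by
    rcases le_or_gt py d₁ with h | h
    · exact lt_max_of_lt_right (by linarith)
    · exact lt_max_of_lt_left (by linarith)
  refine ⟨max c₂ (px + (a₂ - px) * (2 * M) / ε), le_max_left _ _, ?_⟩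
  intro x hx w hw
  obtain ⟨hw1, hw2⟩ := hw
  simp only [mem_singleton_iff] at hw1
  have hxc : c₂ ≤ x := le_trans (le_max_left _ _) hx
  have hxpx : px < x := by linarith
  have hax : a₂ ≤ x := by linarith
  set θ : ℝ := (a₂ - px) / (x - px) with hθ
  have hθpos : 0 < θ := div_pos (by linarith) (by linarith)
  have hθ1 : θ < 1 := (div_lt_one (by linarith)).2 (by linarith)
  -- θ ≤ ε / (2*M)
  have hxbig : px + (a₂ - px) * (2 * M) / ε ≤ x := le_trans (le_max_right _ _) hx
  have hθsmall : θ * M ≤ ε / 2 := by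
    have h1 : (a₂ - px) * (2 * M) / ε ≤ x - px := by linarith
    have h2 : (a₂ - px) * (2 * M) ≤ (x - px) * ε := by
      rw [div_le_iff₀ hεpos] at h1; linarith
    rw [hθ, div_mul_eq_mul_div, div_le_div_iff₀ (by linarith) (by norm_num)]
    nlinarith
  have htabs : |w.2 - py| ≤ M := by
    rw [abs_le]
    constructor
    · have := hw2.2; simp only [hM]; have := le_max_left (py - d₁) (d₂ - py); linarith [hw2.1]
    · have := hw2.2; have := le_max_right (py - d₁) (d₂ - py); linarith
  have hkey : |θ * (w.2 - py)| < ε := by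
    rw [abs_mul, abs_of_pos hθpos]
    calc θ * |w.2 - py| ≤ θ * M := by nlinarith
      _ ≤ ε / 2 := hθsmall
      _ < ε := by linarith
  have hkey' : -ε < θ * (w.2 - py) ∧ θ * (w.2 - py) < ε := abs_lt.1 hkey
  have hε1 : ε ≤ py - m₁ := min_le_left _ _
  have hε2 : ε ≤ m₂ - py := min_le_right _ _
  refine ⟨⟨⟨by rw [hw1]; exact hax, by rw [hw1]⟩, hw2⟩, (a₂, py + θ * (w.2 - py)), ?_, ?_⟩
  · refine ⟨1 - θ, θ, by linarith, hθpos, by ring, ?_⟩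
    have : w = (w.1, w.2) := rfl
    rw [this, hw1, Prod.smul_mk, Prod.smul_mk, Prod.mk_add_mk, Prod.mk.injEq]
    constructor
    · have hxne : x - px ≠ 0 := by linarith
      simp only [smul_eq_mul, hθ]
      field_simp
      ring
    · simp only [smul_eq_mul]; ring
  · refine ⟨mem_singleton _, ?_, ?_⟩ <;> simp only <;>
      [linarith [hkey'.1]; linarith [hkey'.2]]
end

section
/- Let u = [a₁,a₂]×[b₁,b₂] and v = [a₂,c₂]×[d₁,d₂] be vertically adjacent axis-aligned rectangles with u to the left of v and d₁ < b₁ < d₂ < b₂ (so [u,v] = {a₂}×[b₁,d₂]), and let p = (px,py) be a point in the interior of u with py > d₂ (p is a non-diverging neighbor of v lying above the common segment). Fix a gate height interval [g₁,g₂] with d₁ < g₁ < g₂ < d₂. Then: (i) there exists X ≥ c₂ such that for every x ≥ X, if v is stretched to v' = [a₂,x]×[d₁,d₂], the gate {x}×[g₁,g₂] of v' has nonempty intersection with blind(p,v'), i.e. the point (x,g₂) lies strictly above the line through p and (a₂,d₂); and (ii) if the gate {c₂}×[g₁,g₂] meets blind(p,v) and moreover every point of the gate lies strictly above the line through p and the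 bottom endpoint (a₂,b₁) of [u,v], then there exists y with d₂ < y < py such that for the raised rectangle v_y = [a₂,c₂]×[d₁,y] (whose common segment with u is {a₂}×[b₁,y]) the gate {c₂}×[g₁,g₂] is contained in the visibility region vis(p, v_y). -/
open Set

/-- The y-coordinate, at abscissa `x`, of the (non-vertical) line through
`(px, py)` and `(qx, qy)` (with `px ≠ qx`). -/
noncomputable def lineY (px py qx qy x : ℝ) : ℝ :=
  py + (x - px) * (qy - py) / (qx - px)

/-- `u = [a₁,a₂]×[b₁,b₂]` is to the left of `v = [a₂,c₂]×[d₁,d₂]` with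
`d₁ < b₁ < d₂ < b₂` (common segment `{a₂}×[b₁,d₂]`), and `p = (px,py)` is a point in
the interior of `u` with `py > d₂` (a non-diverging neighbor lying above the common
segment). Fix a gate height interval `[g₁,g₂]` with `d₁ < g₁ < g₂ < d₂`. Then:
(i) after a sufficiently large stretch of `v`, the gate meets `blind(p,v')`, i.e. the
point `(x,g₂)` lies strictly above the line through `p` and `(a₂,d₂)`; and
(ii) if the gate meets `blind(p,v)` and every point of the gate lies strictly above
the line through `p` and `(a₂,b₁)`, then the top side of `v` can be raised to some
`y` with `d₂ < y < py` so that the gate is contained in the visibility region of `p`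
inside the raised rectangle `v_y = [a₂,c₂]×[d₁,y]` (whose common segment with `u` is
`{a₂}×[b₁,y]`). -/
theorem nondiverging_above_stretch_and_raise
    (a₁ a₂ b₁ b₂ c₂ d₁ d₂ g₁ g₂ px py : ℝ)
    (ha : a₁ < a₂) (hb : b₁ < b₂) (hc : a₂ < c₂)
    (hd₁ : d₁ < b₁) (hd₂ : b₁ < d₂) (hd₃ : d₂ < b₂)
    (hp : (px, py) ∈ interior (Icc a₁ a₂ ×ˢ Icc b₁ b₂))
    (hpy : d₂ < py)
    (hg₁ : d₁ < g₁) (hg : g₁ < g₂) (hg₂ : g₂ < d₂) :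
    -- (i) stretching makes the gate meet the blind region
    (∃ X : ℝ, c₂ ≤ X ∧ ∀ x : ℝ, X ≤ x →
      lineY px py a₂ d₂ x < g₂) ∧
    -- (ii) raising the top side yields full visibility of the gate
    ((∃ t : ℝ, g₁ ≤ t ∧ t ≤ g₂ ∧ lineY px py a₂ d₂ c₂ < t) →
     (∀ t : ℝ, g₁ ≤ t → t ≤ g₂ → lineY px py a₂ b₁ c₂ < t) →
      ∃ y : ℝ, d₂ < y ∧ y < py ∧
        ({c₂} : Set ℝ) ×ˢ Icc g₁ g₂ ⊆
          visRegion (px, py) (Icc a₂ c₂ ×ˢ Icc d₁ y)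
            (({a₂} : Set ℝ) ×ˢ Ioo b₁ y)) := by
  have hint : interior (Icc a₁ a₂ ×ˢ Icc b₁ b₂) = Ioo a₁ a₂ ×ˢ Ioo b₁ b₂ := by
    rw [interior_prod_eq, interior_Icc, interior_Icc]
  rw [hint] at hp
  obtain ⟨hpx, hpyi⟩ := hp
  have hD : (0:ℝ) < a₂ - px := by linarith [hpx.2]
  have hdpy : d₂ - py < 0 := by linarith
  constructor
  · refine ⟨max c₂ (px + (g₂ - py) * (a₂ - px) / (d₂ - py) + 1), le_max_left _ _, ?_⟩
    intro x hx
    have hx' : px + (g₂ - py) * (a₂ - px) / (d₂ - py) + 1 ≤ x :=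
      le_trans (le_max_right _ _) hx
    have h1 : (g₂ - py) * (a₂ - px) / (d₂ - py) < x - px := by linarith
    have h2 : (x - px) * (d₂ - py) < (g₂ - py) * (a₂ - px) / (d₂ - py) * (d₂ - py) :=
      mul_lt_mul_of_neg_right h1 hdpy
    rw [div_mul_cancel₀ _ (ne_of_lt hdpy)] at h2
    have key : (x - px) * (d₂ - py) / (a₂ - px) < g₂ - py :=
      (div_lt_iff₀ hD).mpr h2
    unfold lineY
    linarith
  · intro _ h2
    have hcpx : (0:ℝ) < c₂ - px := by linarith [hpx.2]
    set s := (a₂ - px) / (c₂ - px) with hs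
    have hs0 : 0 < s := div_pos hD hcpx
    have hs1 : s < 1 := (div_lt_one hcpx).mpr (by linarith)
    set M := max d₂ (py + s * (g₂ - py)) with hM
    have hMpy : M < py := by
      apply max_lt hpy
      nlinarith
    refine ⟨(M + py) / 2, ?_, by linarith, ?_⟩
    · have := le_max_left d₂ (py + s * (g₂ - py)); linarith
    · rintro ⟨wx, wy⟩ ⟨hwx, hwy⟩
      simp only [mem_singleton_iff] at hwx
      rw [hwx]
      obtain ⟨hwy1, hwy2⟩ : g₁ ≤ wy ∧ wy ≤ g₂ := hwy
      have hy1 : d₂ < (M + py) / 2 := by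
        have := le_max_left d₂ (py + s * (g₂ - py)); linarith
      constructor
      · exact ⟨⟨le_of_lt hc, le_refl _⟩, ⟨by linarith, by linarith⟩⟩
      · refine ⟨(a₂, py + s * (wy - py)), ⟨1 - s, s, by linarith, hs0, by ring, ?_⟩, ?_⟩
        · have hx : (1 - s) * px + s * c₂ = a₂ := by
            rw [hs]; field_simp; ring
          have hyy : (1 - s) * py + s * wy = py + s * (wy - py) := by ring
          simp only [Prod.smul_mk, smul_eq_mul, Prod.mk_add_mk, Prod.mk.injEq]
          exact ⟨hx, hyy⟩
        · refine ⟨rfl, ?_, ?_⟩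
          · -- b₁ < py + s * (wy - py)
            have hl := h2 wy hwy1 hwy2
            unfold lineY at hl
            have hl' : (c₂ - px) * (b₁ - py) / (a₂ - px) < wy - py := by linarith
            have hl'' : (c₂ - px) * (b₁ - py) < (wy - py) * (a₂ - px) :=
              (div_lt_iff₀ hD).mp hl'
            rw [hs]
            have hkey : (b₁ - py) < (a₂ - px) * (wy - py) / (c₂ - px) := by
              rw [lt_div_iff₀ hcpx]; nlinarith
            have hrw : (a₂ - px) / (c₂ - px) * (wy - py)
                = (a₂ - px) * (wy - py) / (c₂ - px) := by ring
            rw [hrw]; linarith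
          · -- py + s * (wy - py) < (M + py) / 2
            have h3 : py + s * (wy - py) ≤ py + s * (g₂ - py) := by nlinarith
            have h4 : py + s * (g₂ - py) ≤ M := le_max_right _ _
            linarith
end

section
/- Let u = [a₁,a₂]×[b₁,b₂] and v = [a₂,c₂]×[d₁,d₂] be vertically adjacent axis-aligned rectangles with u to the left of v and b₁ < d₁ < b₂ < d₂ (so [u,v] = {a₂}×[d₁,b₂]), and let p = (px,py) be a point in the interior of u with py < d₁ (p is a non-diverging neighbor of v lying below the common segment). Fix a gate height interval [g₁,g₂] with d₁ < g₁ < g₂ < d₂. Then: (i) there exists X ≥ c₂ such that for every x ≥ X, if v is stretched to v' = [a₂,x]×[d₁,d₂], the gate {x}×[g₁,g₂] of v' has nonempty intersection with blind(p,v'), i.e. the point (x,g₁) lies strictly below the line through p and (a₂,d₁); and (ii) if the gate {c₂}×[g₁,g₂] meets blind(p,v) and moreover every point of the gate lies strictly below the line through p and the top endpoint (a₂,b₂) of [u,v], then there exists y with py < y < d₁ such that for the lowered rectangle v_y = [a₂,c₂]×[y,d₂] (whose common segment with u is {a₂}×[y,b₂]) the gate {c₂}×[g₁,g₂] is contained in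 the visibility region vis(p, v_y). -/
open Set

set_option maxHeartbeats 2000000 in
/-- `u = [a₁,a₂]×[b₁,b₂]` is to the left of `v = [a₂,c₂]×[d₁,d₂]` with
`b₁ < d₁ < b₂ < d₂` (common segment `{a₂}×[d₁,b₂]`), and `p = (px,py)` is a point in
the interior of `u` with `py < d₁` (a non-diverging neighbor lying below the common
segment). Fix a gate height interval `[g₁,g₂]` with `d₁ < g₁ < g₂ < d₂`. Then:
(i) after a sufficiently large stretch of `v`, the gate meets `blind(p,v')`, i.e. the
point `(x,g₁)` lies strictly below the line through `p` and `(a₂,d₁)`; and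
(ii) if the gate meets `blind(p,v)` and every point of the gate lies strictly below
the line through `p` and `(a₂,b₂)`, then the bottom side of `v` can be lowered to some
`y` with `py < y < d₁` so that the gate is contained in the visibility region of `p`
inside the lowered rectangle `v_y = [a₂,c₂]×[y,d₂]` (whose common segment with `u` is
`{a₂}×[y,b₂]`). -/
theorem nondiverging_below_stretch_and_lower
    (a₁ a₂ b₁ b₂ c₂ d₁ d₂ g₁ g₂ px py : ℝ)
    (ha : a₁ < a₂) (hb : b₁ < b₂) (hc : a₂ < c₂)
    (hd₁ : b₁ < d₁) (hd₂ : d₁ < b₂) (hd₃ : b₂ < d₂)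
    (hp : (px, py) ∈ interior (Icc a₁ a₂ ×ˢ Icc b₁ b₂))
    (hpy : py < d₁)
    (hg₁ : d₁ < g₁) (hg : g₁ < g₂) (hg₂ : g₂ < d₂) :
    -- (i) stretching makes the gate meet the blind region
    (∃ X : ℝ, c₂ ≤ X ∧ ∀ x : ℝ, X ≤ x →
      g₁ < lineY px py a₂ d₁ x) ∧
    -- (ii) lowering the bottom side yields full visibility of the gate
    ((∃ t : ℝ, g₁ ≤ t ∧ t ≤ g₂ ∧ t < lineY px py a₂ d₁ c₂) →
     (∀ t : ℝ, g₁ ≤ t → t ≤ g₂ → t < lineY px py a₂ b₂ c₂) →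
      ∃ y : ℝ, py < y ∧ y < d₁ ∧
        ({c₂} : Set ℝ) ×ˢ Icc g₁ g₂ ⊆
          visRegion (px, py) (Icc a₂ c₂ ×ˢ Icc y d₂)
            (({a₂} : Set ℝ) ×ˢ Ioo y b₂)) := by
  rw [interior_prod_eq, interior_Icc, interior_Icc, mem_prod] at hp
  obtain ⟨⟨hpx1', hpx2'⟩, hpy1', hpy2'⟩ := hp
  have hpx1 : a₁ < px := hpx1'
  have hpx2 : px < a₂ := hpx2'
  have hpy1 : b₁ < py := hpy1'
  have hpy2 : py < b₂ := hpy2'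
  have hax : (0:ℝ) < a₂ - px := by linarith
  have hcx : (0:ℝ) < c₂ - px := by linarith
  constructor
  · set s := (d₁ - py) / (a₂ - px) with hs
    have hspos : 0 < s := div_pos (by linarith) hax
    refine ⟨max c₂ (px + (g₁ - py + 1)/s), le_max_left _ _, fun x hx => ?_⟩
    have hx2 : px + (g₁ - py + 1)/s ≤ x := le_trans (le_max_right _ _) hx
    have h3 : (g₁ - py + 1)/s ≤ x - px := by linarith
    have h4 : g₁ - py + 1 ≤ (x - px) * s := (div_le_iff₀ hspos).mp h3
    unfold lineY
    rw [mul_div_assoc]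
    rw [hs] at h4
    linarith
  · rintro - hall
    have hub : g₂ < lineY px py a₂ b₂ c₂ := hall g₂ (le_of_lt hg) le_rfl
    unfold lineY at hub
    set θ := (a₂ - px) / (c₂ - px) with hθ
    have hθ0 : 0 < θ := div_pos hax hcx
    have hθ1 : θ < 1 := (div_lt_one hcx).mpr (by linarith)
    have hθc : θ * (c₂ - px) = a₂ - px := div_mul_cancel₀ _ (ne_of_gt hcx)
    -- key: θ * (g₂ - py) < b₂ - py
    have hkey : θ * (g₂ - py) < b₂ - py := by
      have h1 : (g₂ - py) * (a₂ - px) < (c₂ - px) * (b₂ - py) := by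
        have h1' : g₂ - py < (c₂ - px) * (b₂ - py) / (a₂ - px) := by linarith
        have h2 := (lt_div_iff₀ hax).mp h1'
        linarith
      rw [hθ]
      rw [div_mul_eq_mul_div, div_lt_iff₀ hcx]
      nlinarith
    have hH : py < py + θ * (g₁ - py) := by nlinarith
    set y := (py + min d₁ (py + θ * (g₁ - py))) / 2 with hy
    have hymin : py < min d₁ (py + θ * (g₁ - py)) := lt_min hpy hH
    have hy1 : py < y := by rw [hy]; linarith
    have hy2 : y < d₁ := by
      have := min_le_left d₁ (py + θ * (g₁ - py))
      rw [hy]; linarith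
    have hy3 : y < py + θ * (g₁ - py) := by
      have := min_le_right d₁ (py + θ * (g₁ - py))
      rw [hy]; linarith
    refine ⟨y, hy1, hy2, ?_⟩
    rintro ⟨wx, wt⟩ ⟨hwx, hwt1, hwt2⟩
    simp only [mem_singleton_iff] at hwx
    subst wx
    refine ⟨⟨⟨le_of_lt hc, le_rfl⟩, by linarith, by linarith⟩, ?_⟩
    refine ⟨(a₂, py + θ * (wt - py)), ?_, ?_⟩
    · refine ⟨1 - θ, θ, by linarith, hθ0, by ring, ?_⟩
      have : (1 - θ) • ((px, py) : ℝ × ℝ) + θ • ((c₂, wt) : ℝ × ℝ)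
          = ((1 - θ) * px + θ * c₂, (1 - θ) * py + θ * wt) := by
        simp [Prod.ext_iff, Prod.smul_def, smul_eq_mul]
      rw [this, Prod.ext_iff]
      constructor
      · simp only
        nlinarith [hθc]
      · simp only
        ring
    · refine ⟨rfl, ?_, ?_⟩
      · show y < py + θ * (wt - py)
        have h5 : 0 ≤ θ * (wt - g₁) := mul_nonneg hθ0.le (by linarith)
        nlinarith [hy3, h5]
      · show py + θ * (wt - py) < b₂
        have h6 : 0 ≤ θ * (g₂ - wt) := mul_nonneg hθ0.le (by linarith)
        nlinarith [hkey, h6]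
end

section
/- Let u and v be axis-aligned rectangles with disjoint interiors whose intersection S = u ∩ v is a segment of positive length (u and v are adjacent rectangles with common segment S). Let p be a point in the interior of u and q a point in the interior of v, and suppose the open segment from p to q contains a point z in the relative interior of S. Then the closed segment from p to q is contained in u ∪ v, it meets the union of the boundaries of u and v exactly in the single point z, the open segment from p to z lies in the interior of u, and the open segment from z to q lies in the interior of v. -/
open Set

/-- An axis-aligned rectangle: a product `[x₁,x₂] × [y₁,y₂]` with `x₁ < x₂` and `y₁ < y₂`. -/
def IsRect (s : Set (ℝ × ℝ)) : Prop :=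
  ∃ x₁ x₂ y₁ y₂ : ℝ, x₁ < x₂ ∧ y₁ < y₂ ∧ s = Icc x₁ x₂ ×ˢ Icc y₁ y₂

/-!
Rectangles are convex, and for convex `u`, `v` with disjoint interiors the interior of `u` misses
all of `closure v` (because `closure v = closure (interior v)`), and vice versa.
Convexity puts `[p, z)` in `interior u` and `(z, q]` in `interior v`, so every point of `[p, q]`
other than `z` lies in one interior and outside the closure of the other set, hence on neither
frontier; while `z`, lying in both closures, is on both frontiers.
-/

section Convex

variable {𝕜 E : Type*} [Field 𝕜] [LinearOrder 𝕜] [IsStrictOrderedRing 𝕜]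
  [AddCommGroup E] [Module 𝕜 E] {u v : Set E} {p q z : E}

theorem segment_subset_insert_openSegment_union (hz : z ∈ openSegment 𝕜 p q) :
    segment 𝕜 p q ⊆ insert z (insert p (openSegment 𝕜 p z) ∪ insert q (openSegment 𝕜 z q)) := by
  have hz_line : z ∈ range (AffineMap.lineMap p q : 𝕜 → E) := by
    rw [openSegment_eq_image_lineMap] at hz
    exact image_subset_range _ _ hz
  rw [← insert_endpoints_openSegment]
  refine insert_subset (by simp) (insert_subset (by simp) ?_)
  exact Subset.trans (openSegment_subset_union p q hz_line) <|
    insert_subset_insert <| union_subset_union (subset_insert _ _) (subset_insert _ _)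

variable [TopologicalSpace E] [IsTopologicalAddGroup E]

theorem Convex.segment_subset_insert_interior_union [ContinuousConstSMul 𝕜 E]
    (hu : Convex 𝕜 u) (hv : Convex 𝕜 v) (hp : p ∈ interior u) (hq : q ∈ interior v)
    (hz : z ∈ openSegment 𝕜 p q) (hzu : z ∈ closure u) (hzv : z ∈ closure v) :
    segment 𝕜 p q ⊆ insert z (interior u ∪ interior v) :=
  Subset.trans (segment_subset_insert_openSegment_union hz) <| insert_subset_insert <|
    union_subset_union (insert_subset hp (hu.openSegment_interior_closure_subset_interior hp hzu))
      (insert_subset hq (hv.openSegment_closure_interior_subset_interior hzv hq))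

variable [TopologicalSpace 𝕜] [OrderTopology 𝕜] [ContinuousSMul 𝕜 E]

theorem Convex.disjoint_interior_closure (hv : Convex 𝕜 v) (hv₀ : (interior v).Nonempty)
    (h : Disjoint (interior u) (interior v)) : Disjoint (interior u) (closure v) := by
  rw [← hv.closure_interior_eq_closure_of_nonempty_interior hv₀]
  exact h.closure_right isOpen_interior

theorem Convex.segment_inter_frontier_union_eq_singleton (hu : Convex 𝕜 u) (hv : Convex 𝕜 v)
    (hdisj : Disjoint (interior u) (interior v)) (hp : p ∈ interior u) (hq : q ∈ interior v)
    (hz : z ∈ openSegment 𝕜 p q) (hzu : z ∈ closure u) (hzv : z ∈ closure v) :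
    segment 𝕜 p q ∩ (frontier u ∪ frontier v) = {z} := by
  have huv := hv.disjoint_interior_closure ⟨q, hq⟩ hdisj
  have hvu := hu.disjoint_interior_closure ⟨p, hp⟩ hdisj.symm
  refine Subset.antisymm ?_ ?_
  · rintro w ⟨hw, hwf⟩
    rcases hu.segment_subset_insert_interior_union hv hp hq hz hzu hzv hw with rfl | hwu | hwv
    · rfl
    · rcases hwf with hf | hf
      · exact absurd hf (disjoint_interior_frontier.notMem_of_mem_left hwu)
      · exact absurd (frontier_subset_closure hf) (huv.notMem_of_mem_left hwu)
    · rcases hwf with hf | hf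
      · exact absurd (frontier_subset_closure hf) (hvu.notMem_of_mem_left hwv)
      · exact absurd hf (disjoint_interior_frontier.notMem_of_mem_left hwv)
  · rintro _ rfl
    exact ⟨openSegment_subset_segment _ _ _ hz,
      Or.inl ⟨hzu, fun h ↦ huv.notMem_of_mem_left h hzv⟩⟩

end Convex

theorem IsRect.convex {s : Set (ℝ × ℝ)} (h : IsRect s) : Convex ℝ s := by
  obtain ⟨x₁, x₂, y₁, y₂, -, -, rfl⟩ := h
  exact (convex_Icc x₁ x₂).prod (convex_Icc y₁ y₂)

theorem segment_between_adjacent_rectangles_general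
    (u v : Set (ℝ × ℝ)) (hu : IsRect u) (hv : IsRect v)
    (hdisj : interior u ∩ interior v = ∅)
    (p q z : ℝ × ℝ) (hp : p ∈ interior u) (hq : q ∈ interior v)
    (hz : z ∈ openSegment ℝ p q) (hzS : z ∈ intrinsicInterior ℝ (u ∩ v)) :
    segment ℝ p q ⊆ u ∪ v ∧
    segment ℝ p q ∩ (frontier u ∪ frontier v) = {z} ∧
    openSegment ℝ p z ⊆ interior u ∧
    openSegment ℝ z q ⊆ interior v := by
  obtain ⟨hzu, hzv⟩ : z ∈ u ∩ v := intrinsicInterior_subset hzS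
  have hzu' := subset_closure hzu
  have hzv' := subset_closure hzv
  refine ⟨?_, hu.convex.segment_inter_frontier_union_eq_singleton hv.convex
      (disjoint_iff_inter_eq_empty.2 hdisj) hp hq hz hzu' hzv',
    hu.convex.openSegment_interior_closure_subset_interior hp hzu',
    hv.convex.openSegment_closure_interior_subset_interior hzv' hq⟩
  exact Subset.trans
    (hu.convex.segment_subset_insert_interior_union hv.convex hp hq hz hzu' hzv') <|
    insert_subset (Or.inl hzu) (union_subset_union interior_subset interior_subset)

/-- let `u` and `v` be adjacent axis-aligned rectangles (disjoint
interiors, common segment `u ∩ v` of positive length), `p ∈ interior u`,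
`q ∈ interior v`, and suppose the open segment from `p` to `q` contains a point `z`
in the relative interior of `u ∩ v`. Then the closed segment from `p` to `q` lies in
`u ∪ v`, meets the union of the two boundaries exactly in `z`, and the open
subsegments from `p` to `z` and from `z` to `q` lie in the interiors of `u` and `v`,
respectively. -/
theorem segment_between_adjacent_rectangles
    (u v : Set (ℝ × ℝ)) (hu : IsRect u) (hv : IsRect v)
    (hdisj : interior u ∩ interior v = ∅)
    (hseg : ∃ e f : ℝ × ℝ, e ≠ f ∧ u ∩ v = segment ℝ e f)
    (p q z : ℝ × ℝ) (hp : p ∈ interior u) (hq : q ∈ interior v)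
    (hz : z ∈ openSegment ℝ p q) (hzS : z ∈ intrinsicInterior ℝ (u ∩ v)) :
    segment ℝ p q ⊆ u ∪ v ∧
    segment ℝ p q ∩ (frontier u ∪ frontier v) = {z} ∧
    openSegment ℝ p z ⊆ interior u ∧
    openSegment ℝ z q ⊆ interior v :=
  segment_between_adjacent_rectangles_general u v hu hv hdisj p q z hp hq hz hzS
end
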